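/- arXiv:1912.07972 — 3 statements merged into one kernel-verified Lean document; each statement's English description precedes it below -/
import Mathlib

section
/- Let E be a finite-dimensional real vector space equipped with a Euclidean norm ‖x‖ = ⟨Bx, x⟩^{1/2}, where B = B* ≻ 0 is a fixed symmetric positive-definite linear operator. Fix x₀ ∈ E, an integer p ≥ 1, and set d(x) = (1/(p+1))·‖x − x₀‖^{p+1}. Then d is uniformly convex of degree p+1 with constant 2^{1−p}: for all x, y ∈ E, β_d(x; y) ≥ (2^{1−p}/(p+1))·‖x − y‖^{p+1}. -/
open scoped RealInnerProductSpace


theorem grad_aux {E : Type*} [NormedAddCommGroup E] [InnerProductSpace ℝ E] [FiniteDimensional ℝ E]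
    (p : ℕ) (hp : 1 ≤ p) (x₀ : E) (d : E → ℝ)
    (hd : ∀ x, d x = (1 / ((p : ℝ) + 1)) * ‖x - x₀‖ ^ (p + 1)) (z : E) :
    HasGradientAt d (‖z - x₀‖ ^ (p - 1) • (z - x₀)) z := by
  rw [hasGradientAt_iff_hasFDerivAt]
  set e : ℝ := ((p : ℝ) + 1) / 2 with he
  have hp1 : (1:ℝ) ≤ (p:ℝ) := by exact_mod_cast hp
  have he1 : (1 : ℝ) ≤ e := by
    rw [he, le_div_iff₀ (by norm_num)]; linarith
  have hQ : HasFDerivAt (fun w : E => ⟪w - x₀, w - x₀⟫)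
      ((fderivInnerCLM ℝ ((z - x₀ : E), (z - x₀ : E))).comp
        ((ContinuousLinearMap.id ℝ E).prod (ContinuousLinearMap.id ℝ E))) z := by
    have h1 : HasFDerivAt (fun w : E => w - x₀) (ContinuousLinearMap.id ℝ E) z :=
      (hasFDerivAt_id z).sub_const x₀
    exact h1.inner ℝ h1
  have hφ : HasDerivAt (fun t : ℝ => (1 / ((p:ℝ)+1)) * t ^ e)
      ((1 / ((p:ℝ)+1)) * (e * (⟪z - x₀, z - x₀⟫ : ℝ) ^ (e - 1))) (⟪z - x₀, z - x₀⟫ : ℝ) := by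
    exact (Real.hasDerivAt_rpow_const (Or.inr he1)).const_mul _
  have hcomp := hφ.comp_hasFDerivAt z hQ
  have hexp : ((2:ℕ):ℝ) * e = ((p + 1 : ℕ) : ℝ) := by push_cast; rw [he]; ring
  have heq : ∀ w : E, d w = (1 / ((p:ℝ)+1)) * (⟪w - x₀, w - x₀⟫ : ℝ) ^ e := by
    intro w
    rw [hd w, real_inner_self_eq_norm_sq, ← Real.rpow_natCast ‖w - x₀‖ 2,
      ← Real.rpow_mul (norm_nonneg _), hexp, Real.rpow_natCast]
  have hcomp' : HasFDerivAt d
      (((1 / ((p:ℝ)+1)) * (e * (⟪z - x₀, z - x₀⟫ : ℝ) ^ (e - 1))) •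
        ((fderivInnerCLM ℝ ((z - x₀ : E), (z - x₀ : E))).comp
        ((ContinuousLinearMap.id ℝ E).prod (ContinuousLinearMap.id ℝ E)))) z := by
    refine HasFDerivAt.congr_of_eventuallyEq hcomp (Filter.Eventually.of_forall fun w => ?_)
    rw [heq w]; rfl
  refine hcomp'.congr_fderiv ?_
  ext v
  simp only [ContinuousLinearMap.smul_apply, ContinuousLinearMap.coe_comp', Function.comp_apply,
    ContinuousLinearMap.prod_apply, ContinuousLinearMap.coe_id', id_eq,
    fderivInnerCLM_apply, InnerProductSpace.toDual_apply_apply, real_inner_smul_left,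
    smul_eq_mul]
  rw [real_inner_comm v (z - x₀), real_inner_self_eq_norm_sq]
  have hnorm : (‖z - x₀‖ ^ 2 : ℝ) ^ (e - 1) = ‖z - x₀‖ ^ (p - 1) := by
    rw [← Real.rpow_natCast ‖z - x₀‖ 2, ← Real.rpow_mul (norm_nonneg _),
      ← Real.rpow_natCast ‖z - x₀‖ (p - 1)]
    congr 1
    have hc : ((p - 1 : ℕ) : ℝ) = (p : ℝ) - 1 := by
      have := Nat.cast_sub hp (R := ℝ); simpa using this
    rw [hc, he]; push_cast; ring
  rw [hnorm, he]
  field_simp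
  ring


theorem pow_sum_aux {s t : ℝ} (hs : 0 ≤ s) (ht : 0 ≤ t) (n : ℕ) :
    2 * (s + t) ^ n ≤ 2 ^ n * (s ^ n + t ^ n) := by
  induction n with
  | zero => norm_num
  | succ n ih =>
    have hst : s * t ^ n + t * s ^ n ≤ s ^ (n+1) + t ^ (n+1) := by
      rcases le_total s t with h | h
      · have hpow : s ^ n ≤ t ^ n := pow_le_pow_left₀ hs h n
        have hprod : 0 ≤ (t - s) * (t ^ n - s ^ n) :=
          mul_nonneg (by linarith) (by linarith)
        have hexp : (t - s) * (t ^ n - s ^ n)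
            = (s ^ (n+1) + t ^ (n+1)) - (s * t ^ n + t * s ^ n) := by ring
        linarith [hexp ▸ hprod]
      · have hpow : t ^ n ≤ s ^ n := pow_le_pow_left₀ ht h n
        have hprod : 0 ≤ (s - t) * (s ^ n - t ^ n) :=
          mul_nonneg (by linarith) (by linarith)
        have hexp : (s - t) * (s ^ n - t ^ n)
            = (s ^ (n+1) + t ^ (n+1)) - (s * t ^ n + t * s ^ n) := by ring
        linarith [hexp ▸ hprod]
    calc 2 * (s + t) ^ (n + 1) = (s + t) * (2 * (s + t) ^ n) := by ring
      _ ≤ (s + t) * (2 ^ n * (s ^ n + t ^ n)) := by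
          apply mul_le_mul_of_nonneg_left ih (by linarith)
      _ = 2 ^ n * (s ^ (n+1) + t ^ (n+1) + (s * t ^ n + t * s ^ n)) := by ring
      _ ≤ 2 ^ n * (s ^ (n+1) + t ^ (n+1) + (s ^ (n+1) + t ^ (n+1))) := by
          apply mul_le_mul_of_nonneg_left (by linarith) (by positivity)
      _ = 2 ^ (n+1) * (s ^ (n+1) + t ^ (n+1)) := by ring

theorem mono_aux {E : Type*} [NormedAddCommGroup E] [InnerProductSpace ℝ E]
    (p : ℕ) (hp : 1 ≤ p) (u v : E) :
    ((2:ℝ) ^ (p - 1))⁻¹ * ‖u - v‖ ^ (p + 1) ≤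
      ⟪‖u‖ ^ (p - 1) • u - ‖v‖ ^ (p - 1) • v, u - v⟫ := by
  set a := ‖u‖ with ha
  set b := ‖v‖ with hb
  set A := a ^ (p - 1) with hA
  set B := b ^ (p - 1) with hB
  set r := ‖u - v‖ with hr
  have ha0 : 0 ≤ a := norm_nonneg u
  have hb0 : 0 ≤ b := norm_nonneg v
  have hr0 : 0 ≤ r := norm_nonneg _
  have hinner : (⟪‖u‖ ^ (p - 1) • u - ‖v‖ ^ (p - 1) • v, u - v⟫ : ℝ)
      = A * a ^ 2 + B * b ^ 2 - (A + B) * ⟪u, v⟫ := by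
    simp only [inner_sub_left, inner_sub_right, real_inner_smul_left,
      real_inner_self_eq_norm_sq, ← ha, ← hb, ← hA, ← hB]
    rw [real_inner_comm v u]
    ring
  have hpar : r ^ 2 = a ^ 2 - 2 * ⟪u, v⟫ + b ^ 2 := by
    rw [hr, ha, hb, norm_sub_sq_real]
  have hAB : 0 ≤ (A - B) * (a ^ 2 - b ^ 2) := by
    rcases le_total a b with h | h
    · have h1 : A ≤ B := pow_le_pow_left₀ ha0 h _
      have h2 : a ^ 2 ≤ b ^ 2 := pow_le_pow_left₀ ha0 h 2
      have := mul_nonneg (sub_nonneg.2 h1) (sub_nonneg.2 h2)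
      nlinarith [this]
    · have h1 : B ≤ A := pow_le_pow_left₀ hb0 h _
      have h2 : b ^ 2 ≤ a ^ 2 := pow_le_pow_left₀ hb0 h 2
      have := mul_nonneg (sub_nonneg.2 h1) (sub_nonneg.2 h2)
      nlinarith [this]
  have hrab : r ≤ a + b := norm_sub_le u v
  have hkey : 2 * r ^ (p - 1) ≤ 2 ^ (p - 1) * (A + B) := by
    calc 2 * r ^ (p - 1) ≤ 2 * (a + b) ^ (p - 1) := by
          apply mul_le_mul_of_nonneg_left (pow_le_pow_left₀ hr0 hrab _) (by norm_num)
      _ ≤ 2 ^ (p - 1) * (A + B) := pow_sum_aux ha0 hb0 _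
  have h2 : ((2:ℝ) ^ (p - 1))⁻¹ * r ^ (p + 1) ≤ (A + B) * r ^ 2 / 2 := by
    have hrp : r ^ (p + 1) = r ^ (p - 1) * r ^ 2 := by
      rw [← pow_add]; congr 1; omega
    rw [hrp, inv_mul_le_iff₀ (by positivity)]
    nlinarith [mul_le_mul_of_nonneg_right hkey (sq_nonneg r)]
  have hI : (⟪u, v⟫ : ℝ) = (a ^ 2 + b ^ 2 - r ^ 2) / 2 := by linarith
  rw [hinner, hI]
  have hring : A * a ^ 2 + B * b ^ 2 - (A + B) * ((a ^ 2 + b ^ 2 - r ^ 2) / 2)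
      = ((A - B) * (a ^ 2 - b ^ 2)) / 2 + (A + B) * r ^ 2 / 2 := by ring
  linarith [hring, hAB, h2]


/-- the prox function `d(x) = (1/(p+1))·‖x − x₀‖^{p+1}` on a Euclidean space
is uniformly convex of degree `p+1` with constant `2^{1−p}`:
`β_d(x; y) ≥ (2^{1−p}/(p+1))·‖x − y‖^{p+1}` for all `x, y`. -/
theorem stmt_2
    {E : Type*} [NormedAddCommGroup E] [InnerProductSpace ℝ E] [FiniteDimensional ℝ E]
    (p : ℕ) (hp : 1 ≤ p) (x₀ : E)
    (d : E → ℝ)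
    (hd : ∀ x, d x = (1 / ((p : ℝ) + 1)) * ‖x - x₀‖ ^ (p + 1))
    (x y : E) :
    d y - d x - ⟪gradient d x, y - x⟫ ≥
      (2 : ℝ) ^ (1 - (p : ℝ)) / ((p : ℝ) + 1) * ‖x - y‖ ^ (p + 1) := by
  set h : E := y - x with hh
  set G : E → E := fun z => ‖z - x₀‖ ^ (p - 1) • (z - x₀) with hG
  set c : ℝ := ((2:ℝ) ^ (p - 1))⁻¹ with hc
  -- gradient identification
  have hgradx : gradient d x = G x := (grad_aux p hp x₀ d hd x).gradient
  -- derivative along the segment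
  have hderiv : ∀ t : ℝ, HasDerivAt (fun s => d (x + s • h)) (⟪G (x + t • h), h⟫) t := by
    intro t
    have hline : HasDerivAt (fun s : ℝ => x + s • h) h t := by
      simpa using ((hasDerivAt_id t).smul_const h).const_add x
    have hg := (grad_aux p hp x₀ d hd (x + t • h)).hasFDerivAt
    have hcd := hg.comp_hasDerivAt t hline
    simpa only [Function.comp_def, InnerProductSpace.toDual_apply_apply] using hcd
  -- continuity of the derivative
  have hline_cont : Continuous fun t : ℝ => x + t • h - x₀ :=
    (continuous_const.add ((continuous_id).smul continuous_const)).sub continuous_const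
  have hGc : Continuous fun t : ℝ => G (x + t • h) :=
    ((hline_cont.norm).pow _).smul hline_cont
  have hcont : Continuous fun t : ℝ => (⟪G (x + t • h), h⟫ : ℝ) :=
    hGc.inner continuous_const
  -- FTC
  have hftc : ∫ t in (0:ℝ)..1, (⟪G (x + t • h), h⟫ : ℝ) = d (x + (1:ℝ) • h) - d (x + (0:ℝ) • h) :=
    intervalIntegral.integral_eq_sub_of_hasDerivAt (fun t _ => hderiv t)
      (hcont.intervalIntegrable 0 1)
  have hy : x + (1:ℝ) • h = y := by rw [hh]; simp
  have hx : x + (0:ℝ) • h = x := by simp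
  rw [hy, hx] at hftc
  -- pointwise lower bound
  have claim : ∀ t : ℝ, 0 ≤ t →
      c * t ^ p * ‖h‖ ^ (p + 1) ≤ ⟪G (x + t • h), h⟫ - ⟪G x, h⟫ := by
    intro t ht
    rcases ht.eq_or_lt with rfl | htpos
    · simp [zero_pow (by omega : p ≠ 0)]
    · have hmono := mono_aux p hp (x + t • h - x₀) (x - x₀)
      have huv : x + t • h - x₀ - (x - x₀) = t • h := by abel
      rw [huv] at hmono
      have hGsub : (⟪‖x + t • h - x₀‖ ^ (p - 1) • (x + t • h - x₀)
            - ‖x - x₀‖ ^ (p - 1) • (x - x₀), t • h⟫ : ℝ)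
          = t * (⟪G (x + t • h), h⟫ - ⟪G x, h⟫) := by
        rw [real_inner_smul_right]
        simp only [hG, inner_sub_left]
      have hnsm : ‖t • h‖ ^ (p + 1) = t ^ (p + 1) * ‖h‖ ^ (p + 1) := by
        rw [norm_smul, Real.norm_eq_abs, abs_of_pos htpos, mul_pow]
      rw [hGsub, hnsm] at hmono
      rw [← mul_le_mul_iff_right₀ htpos]
      calc t * (c * t ^ p * ‖h‖ ^ (p + 1)) = c * (t ^ (p + 1) * ‖h‖ ^ (p + 1)) := by ring
        _ ≤ t * (⟪G (x + t • h), h⟫ - ⟪G x, h⟫) := hmono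
  -- integral comparison
  have hint1 : IntervalIntegrable (fun t : ℝ => c * t ^ p * ‖h‖ ^ (p + 1))
      MeasureTheory.volume 0 1 :=
    ((continuous_const.mul (continuous_pow p)).mul continuous_const).intervalIntegrable 0 1
  have hint2 : IntervalIntegrable (fun t : ℝ => (⟪G (x + t • h), h⟫ : ℝ) - ⟪G x, h⟫)
      MeasureTheory.volume 0 1 := (hcont.sub continuous_const).intervalIntegrable 0 1
  have hmono_int : (∫ t in (0:ℝ)..1, c * t ^ p * ‖h‖ ^ (p + 1)) ≤
      ∫ t in (0:ℝ)..1, ((⟪G (x + t • h), h⟫ : ℝ) - ⟪G x, h⟫) := by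
    apply intervalIntegral.integral_mono_on (by norm_num) hint1 hint2
    intro t ht
    exact claim t ht.1
  -- compute both integrals
  have hleft : (∫ t in (0:ℝ)..1, c * t ^ p * ‖h‖ ^ (p + 1))
      = c * ‖h‖ ^ (p + 1) / ((p:ℝ) + 1) := by
    have : (fun t : ℝ => c * t ^ p * ‖h‖ ^ (p + 1))
        = fun t : ℝ => (c * ‖h‖ ^ (p + 1)) * t ^ p := by funext t; ring
    rw [this, intervalIntegral.integral_const_mul, integral_pow]
    ring
  have hright : (∫ t in (0:ℝ)..1, ((⟪G (x + t • h), h⟫ : ℝ) - ⟪G x, h⟫))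
      = d y - d x - ⟪G x, h⟫ := by
    rw [intervalIntegral.integral_sub (hcont.intervalIntegrable 0 1)
      (intervalIntegrable_const), hftc]
    simp
  rw [hleft, hright] at hmono_int
  -- convert constant
  have hconst : (2 : ℝ) ^ (1 - (p : ℝ)) = c := by
    rw [hc, ← Real.rpow_natCast 2 (p - 1), ← Real.rpow_neg (by norm_num)]
    congr 1
    have : ((p - 1 : ℕ) : ℝ) = (p : ℝ) - 1 := by
      have := Nat.cast_sub hp (R := ℝ); simpa using this
    rw [this]; ring
  have hnorm : ‖x - y‖ = ‖h‖ := by rw [hh, norm_sub_rev]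
  rw [ge_iff_le, hgradx, hconst, hnorm]
  calc c / ((p:ℝ) + 1) * ‖h‖ ^ (p + 1) = c * ‖h‖ ^ (p + 1) / ((p:ℝ) + 1) := by ring
    _ ≤ d y - d x - ⟪G x, h⟫ := hmono_int
end

section
/- Let E be a finite-dimensional real vector space with Euclidean norm ‖x‖ = ⟨Bx, x⟩^{1/2}, B = B* ≻ 0. Let f be convex with Lipschitz continuous third derivative: ‖D³f(y) − D³f(x)‖ ≤ L₃‖y − x‖ for all x, y ∈ dom f. Fix x ∈ dom f and τ > 1, and define g(y) = Ω₃(f, x; y) + (τ²L₃/8)·‖y − x‖⁴, where Ω₃(f, x; y) = f(x) + ⟨∇f(x), y − x⟩ + (1/2)D²f(x)[y − x]² + (1/6)D³f(x)[y − x]³. Then g is strongly convex with respect to the prox function d(h) = (1/2)(1 − 1/τ)·D²f(x)[h]² + (τ(τ−1)L₃/8)·‖h‖⁴ (with constant 1), i.e., for all u, v: g(v) − g(u) − ⟨∇g(u), v − u⟩ ≥ d(v − x) − d(u − x) − ⟨∇d(u − x), v − u⟩. -/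
open scoped RealInnerProductSpace

section Stmt3Aux

variable {E : Type*} [NormedAddCommGroup E] [InnerProductSpace ℝ E]

lemma stmt3_upd2_0 {α : Type*} (p q r : α) :
    Function.update ![p, q] (0 : Fin 2) r = ![r, q] := by
  funext i; fin_cases i <;> simp
lemma stmt3_upd2_1 {α : Type*} (p q r : α) :
    Function.update ![p, q] (1 : Fin 2) r = ![p, r] := by
  funext i; fin_cases i <;> simp
lemma stmt3_upd3_0 {α : Type*} (p q r s : α) :
    Function.update ![p, q, r] (0 : Fin 3) s = ![s, q, r] := by
  funext i; fin_cases i <;> simp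
lemma stmt3_upd3_1 {α : Type*} (p q r s : α) :
    Function.update ![p, q, r] (1 : Fin 3) s = ![p, s, r] := by
  funext i; fin_cases i <;> simp
lemma stmt3_upd3_2 {α : Type*} (p q r s : α) :
    Function.update ![p, q, r] (2 : Fin 3) s = ![p, q, s] := by
  funext i; fin_cases i <;> simp
lemma stmt3_vec2_diag {α : Type*} (p : α) : (fun _ : Fin 2 => p) = ![p, p] := by
  funext i; fin_cases i <;> rfl
lemma stmt3_vec3_diag {α : Type*} (p : α) : (fun _ : Fin 3 => p) = ![p, p, p] := by
  funext i; fin_cases i <;> rfl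

lemma stmt3_m2_add_left (P : ContinuousMultilinearMap ℝ (fun _ : Fin 2 => E) ℝ) (p q r : E) :
    P ![p + q, r] = P ![p, r] + P ![q, r] := by
  have := P.map_update_add ![p, r] 0 p q
  rwa [stmt3_upd2_0, stmt3_upd2_0, stmt3_upd2_0] at this
lemma stmt3_m2_add_right (P : ContinuousMultilinearMap ℝ (fun _ : Fin 2 => E) ℝ) (p q r : E) :
    P ![p, q + r] = P ![p, q] + P ![p, r] := by
  have := P.map_update_add ![p, q] 1 q r
  rwa [stmt3_upd2_1, stmt3_upd2_1, stmt3_upd2_1] at this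
lemma stmt3_m3_add_1 (Q : ContinuousMultilinearMap ℝ (fun _ : Fin 3 => E) ℝ) (p q r s : E) :
    Q ![p + q, r, s] = Q ![p, r, s] + Q ![q, r, s] := by
  have := Q.map_update_add ![p, r, s] 0 p q
  rwa [stmt3_upd3_0, stmt3_upd3_0, stmt3_upd3_0] at this
lemma stmt3_m3_add_2 (Q : ContinuousMultilinearMap ℝ (fun _ : Fin 3 => E) ℝ) (p q r s : E) :
    Q ![p, q + r, s] = Q ![p, q, s] + Q ![p, r, s] := by
  have := Q.map_update_add ![p, q, s] 1 q r
  rwa [stmt3_upd3_1, stmt3_upd3_1, stmt3_upd3_1] at this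
lemma stmt3_m3_add_3 (Q : ContinuousMultilinearMap ℝ (fun _ : Fin 3 => E) ℝ) (p q r s : E) :
    Q ![p, q, r + s] = Q ![p, q, r] + Q ![p, q, s] := by
  have := Q.map_update_add ![p, q, r] 2 r s
  rwa [stmt3_upd3_2, stmt3_upd3_2, stmt3_upd3_2] at this
lemma stmt3_m3_smul_1 (Q : ContinuousMultilinearMap ℝ (fun _ : Fin 3 => E) ℝ)
    (c : ℝ) (p q r : E) : Q ![c • p, q, r] = c * Q ![p, q, r] := by
  have := Q.map_update_smul ![p, q, r] 0 c p
  rwa [stmt3_upd3_0, stmt3_upd3_0] at this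

/-- third derivative representation -/
lemma stmt3_keyrep (f : E → ℝ) (hf : ContDiff ℝ 3 f) (x p s t : E) :
    iteratedFDeriv ℝ 3 f x ![p, s, t]
      = fderiv ℝ (fun z => iteratedFDeriv ℝ 2 f z ![s, t]) x p := by
  have hD2x : DifferentiableAt ℝ (iteratedFDeriv ℝ 2 f) x :=
    ((hf.iteratedFDeriv_right (m := 1) (by norm_num)).differentiable one_ne_zero) x
  rw [fderiv_continuousMultilinear_apply_const_apply hD2x]
  rw [iteratedFDeriv_succ_apply_left]
  rfl

lemma stmt3_keyrep2 (f : E → ℝ) (hf : ContDiff ℝ 3 f) (x p s t : E) :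
    iteratedFDeriv ℝ 3 f x ![p, s, t]
      = fderiv ℝ (fderiv ℝ (fderiv ℝ f)) x p s t := by
  rw [stmt3_keyrep f hf]
  have h1 : (fun z => iteratedFDeriv ℝ 2 f z ![s, t])
      = (fun z => fderiv ℝ (fderiv ℝ f) z s t) := by
    funext z
    rw [iteratedFDeriv_two_apply]
    simp
  rw [h1]
  set G := fderiv ℝ (fderiv ℝ f) with hG
  have hGc : ContDiff ℝ 1 G :=
    (hf.fderiv_right (m := 2) (by norm_num)).fderiv_right (m := 1) (by norm_num)
  have hGd : DifferentiableAt ℝ G x := hGc.differentiable one_ne_zero x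
  have hcd : DifferentiableAt ℝ (fun z => G z s) x :=
    hGd.clm_apply (differentiableAt_const s)
  rw [fderiv_clm_apply hcd (differentiableAt_const t)]
  simp only [fderiv_const, Pi.zero_apply, ContinuousLinearMap.comp_zero, zero_add,
    ContinuousLinearMap.add_apply, ContinuousLinearMap.flip_apply,
    ContinuousLinearMap.coe_comp', Function.comp_apply]
  rw [fderiv_clm_apply hGd (differentiableAt_const s)]
  simp

lemma stmt3_sym12 (f : E → ℝ) (hf : ContDiff ℝ 3 f) (x p q r : E) :
    iteratedFDeriv ℝ 3 f x ![p, q, r] = iteratedFDeriv ℝ 3 f x ![q, p, r] := by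
  rw [stmt3_keyrep2 f hf, stmt3_keyrep2 f hf]
  have hF : ContDiff ℝ 2 (fderiv ℝ f) := hf.fderiv_right (m := 2) (by norm_num)
  have h2 := (hF.contDiffAt (x := x)).isSymmSndFDerivAt (n := 2) (by norm_num) p q
  rw [h2]

lemma stmt3_sym23 (f : E → ℝ) (hf : ContDiff ℝ 3 f) (x p q r : E) :
    iteratedFDeriv ℝ 3 f x ![p, q, r] = iteratedFDeriv ℝ 3 f x ![p, r, q] := by
  rw [stmt3_keyrep f hf, stmt3_keyrep f hf]
  have : (fun z => iteratedFDeriv ℝ 2 f z ![q, r])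
      = (fun z => iteratedFDeriv ℝ 2 f z ![r, q]) := by
    funext z
    rw [iteratedFDeriv_two_apply, iteratedFDeriv_two_apply]
    simp only [Matrix.cons_val_zero, Matrix.cons_val_one, Matrix.head_cons]
    exact (hf.contDiffAt.isSymmSndFDerivAt (by norm_num)).eq q r
  rw [this]

/-- second derivative of a convex function is positive semidefinite -/
lemma stmt3_second_nonneg (f : E → ℝ) (hconv : ConvexOn ℝ Set.univ f)
    (hf : ContDiff ℝ 3 f) (z w : E) : 0 ≤ iteratedFDeriv ℝ 2 f z ![w, w] := by
  have hdf : Differentiable ℝ f := hf.differentiable (by norm_num)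
  have hF : ContDiff ℝ 2 (fderiv ℝ f) := hf.fderiv_right (m := 2) (by norm_num)
  set c : ℝ → E := fun t => z + t • w with hcdef
  have hc : ∀ t : ℝ, HasDerivAt c w t := by
    intro t
    simpa [hcdef] using ((hasDerivAt_id t).smul_const w).const_add z
  set r : ℝ → ℝ := fun t => f (c t) with hrdef
  have rconv : ConvexOn ℝ Set.univ r := by
    have := hconv.comp_affineMap (AffineMap.lineMap z (z + w))
    simp only [Set.preimage_univ] at this
    have e : r = f ∘ AffineMap.lineMap z (z + w) := by
      funext t
      simp [hrdef, hcdef, AffineMap.lineMap_apply]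
      rw [add_comm]
    rw [e]; exact this
  set r1 : ℝ → ℝ := fun t => fderiv ℝ f (c t) w with hr1def
  have hr1 : ∀ t, HasDerivAt r (r1 t) t := by
    intro t
    exact ((hdf (c t)).hasFDerivAt).comp_hasDerivAt t (hc t)
  set m : ℝ → ℝ := fun t => fderiv ℝ (fderiv ℝ f) (c t) w w with hmdef
  have hr2 : ∀ t, HasDerivAt r1 (m t) t := by
    intro t
    have hGd : HasFDerivAt (fderiv ℝ f) (fderiv ℝ (fderiv ℝ f) (c t)) (c t) :=
      ((hF.differentiable (by norm_num)) (c t)).hasFDerivAt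
    have := (hGd.clm_apply (hasFDerivAt_const w (c t))).comp_hasDerivAt t (hc t)
    simpa [hr1def, hmdef, Function.comp_def] using this
  have hmono : Monotone r1 := by
    intro s t hst
    rcases eq_or_lt_of_le hst with rfl | hlt
    · exact le_rfl
    · calc r1 s ≤ slope r s t :=
            rconv.le_slope_of_hasDerivAt (Set.mem_univ s) (Set.mem_univ t) hlt (hr1 s)
        _ ≤ r1 t :=
            rconv.slope_le_of_hasDerivAt (Set.mem_univ s) (Set.mem_univ t) hlt (hr1 t)
  have hm0 : 0 ≤ m 0 := by
    have T : Filter.Tendsto (slope r1 0) (nhdsWithin 0 (Set.Ioi 0)) (nhds (m 0)) :=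
      (hasDerivAt_iff_tendsto_slope.mp (hr2 0)).mono_left
        (nhdsWithin_mono 0 (fun t ht => ne_of_gt ht))
    refine ge_of_tendsto T ?_
    refine eventually_nhdsWithin_of_forall (fun t ht => ?_)
    rw [slope_def_field]
    have h1 : r1 0 ≤ r1 t := hmono (le_of_lt ht)
    have h2 : (0:ℝ) < t - 0 := by simpa using ht
    exact div_nonneg (by linarith) (le_of_lt h2)
  have : m 0 = iteratedFDeriv ℝ 2 f z ![w, w] := by
    rw [iteratedFDeriv_two_apply]
    simp [hmdef, hcdef]
  linarith [hm0, this.symm.le]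

/-- key bound from Lipschitz third derivative -/
lemma stmt3_key_bound (f : E → ℝ) (L₃ : ℝ) (hconv : ConvexOn ℝ Set.univ f)
    (hf : ContDiff ℝ 3 f)
    (hlip : ∀ x y, ‖iteratedFDeriv ℝ 3 f y - iteratedFDeriv ℝ 3 f x‖ ≤ L₃ * ‖y - x‖)
    (x h w : E) :
    0 ≤ iteratedFDeriv ℝ 2 f x ![w, w] + iteratedFDeriv ℝ 3 f x ![h, w, w]
      + L₃ / 2 * (‖h‖ ^ 2 * ‖w‖ ^ 2) := by
  set c : ℝ → E := fun s => x + s • h with hcdef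
  have hc : ∀ s : ℝ, HasDerivAt c h s := fun s => by
    simpa [hcdef] using ((hasDerivAt_id s).smul_const h).const_add x
  set q : ℝ → ℝ := fun s => iteratedFDeriv ℝ 2 f (c s) ![w, w] with hqdef
  set q' : ℝ → ℝ := fun s => iteratedFDeriv ℝ 3 f (c s) ![h, w, w] with hq'def
  have hD2 : Differentiable ℝ (iteratedFDeriv ℝ 2 f) :=
    (hf.iteratedFDeriv_right (m := 1) (by norm_num)).differentiable one_ne_zero
  have hq' : ∀ s, HasDerivAt q (q' s) s := by
    intro s
    have H : HasFDerivAt (fun y => iteratedFDeriv ℝ 2 f y ![w, w])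
        ((fderiv ℝ (iteratedFDeriv ℝ 2 f) (c s)).flipMultilinear ![w, w]) (c s) :=
      (hD2 (c s)).hasFDerivAt.continuousMultilinear_apply_const ![w, w]
    exact H.comp_hasDerivAt s (hc s)
  set C : ℝ := L₃ * (‖h‖ ^ 2 * ‖w‖ ^ 2) with hCdef
  have hbound : ∀ s ∈ Set.Icc (0:ℝ) 1, q' s - q' 0 ≤ C * s := by
    intro s hs
    have h1 : q' s - q' 0
        = (iteratedFDeriv ℝ 3 f (c s) - iteratedFDeriv ℝ 3 f x) ![h, w, w] := by
      simp [hq'def, ContinuousMultilinearMap.sub_apply, hcdef]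
    have h2 : ‖(iteratedFDeriv ℝ 3 f (c s) - iteratedFDeriv ℝ 3 f x) ![h, w, w]‖
        ≤ ‖iteratedFDeriv ℝ 3 f (c s) - iteratedFDeriv ℝ 3 f x‖ * (‖h‖ * (‖w‖ * ‖w‖)) := by
      have := (iteratedFDeriv ℝ 3 f (c s) - iteratedFDeriv ℝ 3 f x).le_opNorm ![h, w, w]
      simpa [Fin.prod_univ_three, mul_assoc] using this
    have h3 : ‖iteratedFDeriv ℝ 3 f (c s) - iteratedFDeriv ℝ 3 f x‖ ≤ L₃ * (s * ‖h‖) := by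
      have := hlip x (c s)
      have hnorm : ‖c s - x‖ = s * ‖h‖ := by
        simp [hcdef, norm_smul, abs_of_nonneg hs.1]
      rwa [hnorm] at this
    calc q' s - q' 0 ≤ ‖(iteratedFDeriv ℝ 3 f (c s) - iteratedFDeriv ℝ 3 f x) ![h, w, w]‖ := by
          rw [h1]; exact le_abs_self _
      _ ≤ ‖iteratedFDeriv ℝ 3 f (c s) - iteratedFDeriv ℝ 3 f x‖ * (‖h‖ * (‖w‖ * ‖w‖)) := h2
      _ ≤ L₃ * (s * ‖h‖) * (‖h‖ * (‖w‖ * ‖w‖)) := by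
          apply mul_le_mul_of_nonneg_right h3
          positivity
      _ = C * s := by rw [hCdef]; ring
  set m : ℝ → ℝ := fun s => q s - s * q' 0 - C / 2 * s ^ 2 with hmdef
  have hm : ∀ s, HasDerivAt m (q' s - q' 0 - C * s) s := by
    intro s
    have h1 : HasDerivAt (fun s : ℝ => s * q' 0) (q' 0) s := by
      simpa using (hasDerivAt_id s).mul_const (q' 0)
    have h2 : HasDerivAt (fun s : ℝ => C / 2 * s ^ 2) (C * s) s := by
      have := (hasDerivAt_pow 2 s).const_mul (C / 2)
      refine this.congr_deriv ?_
      push_cast; ring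
    exact ((hq' s).sub h1).sub h2
  have hanti : AntitoneOn m (Set.Icc 0 1) := by
    apply antitoneOn_of_deriv_nonpos (convex_Icc 0 1)
    · intro s _
      exact (hm s).continuousAt.continuousWithinAt
    · intro s hs
      exact (hm s).differentiableAt.differentiableWithinAt
    · intro s hs
      rw [interior_Icc] at hs
      rw [(hm s).deriv]
      have := hbound s ⟨le_of_lt hs.1, le_of_lt hs.2⟩
      linarith
  have hq1 : 0 ≤ q 1 := stmt3_second_nonneg f hconv hf (c 1) w
  have hq0 : q 0 = iteratedFDeriv ℝ 2 f x ![w, w] := by simp [hqdef, hcdef]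
  have hm10 : m 1 ≤ m 0 := hanti (Set.mem_Icc.mpr ⟨le_rfl, zero_le_one⟩)
    (Set.mem_Icc.mpr ⟨zero_le_one, le_rfl⟩) zero_le_one
  have hq'0 : q' 0 = iteratedFDeriv ℝ 3 f x ![h, w, w] := by simp [hq'def, hcdef]
  simp only [hmdef] at hm10
  rw [hq0, hq'0] at *
  nlinarith [hm10, hq1]

lemma stmt3_poly_nonneg (A B C : ℝ) (h : ∀ t : ℝ, 0 ≤ 2*A + 6*B*t + 12*C*t^2) :
    0 ≤ A + B + C := by
  set P : ℝ → ℝ := fun t => A*t^2 + B*t^3 + C*t^4 with hP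
  set P' : ℝ → ℝ := fun t => 2*A*t + 3*B*t^2 + 4*C*t^3 with hP'
  have hd : ∀ t, HasDerivAt P (P' t) t := by
    intro t
    have := (((hasDerivAt_pow 2 t).const_mul A).add ((hasDerivAt_pow 3 t).const_mul B)).add
      ((hasDerivAt_pow 4 t).const_mul C)
    refine this.congr_deriv ?_
    simp only [hP']; push_cast; ring
  have hd' : ∀ t, HasDerivAt P' (2*A + 6*B*t + 12*C*t^2) t := by
    intro t
    have := (((hasDerivAt_id t).const_mul (2*A)).add ((hasDerivAt_pow 2 t).const_mul (3*B))).add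
      ((hasDerivAt_pow 3 t).const_mul (4*C))
    refine this.congr_deriv ?_
    push_cast; ring
  have hP'mono : MonotoneOn P' (Set.Icc 0 1) := by
    apply monotoneOn_of_deriv_nonneg (convex_Icc 0 1)
    · exact fun s _ => (hd' s).continuousAt.continuousWithinAt
    · exact fun s _ => (hd' s).differentiableAt.differentiableWithinAt
    · intro s _
      rw [(hd' s).deriv]
      exact h s
  have hP'nonneg : ∀ t ∈ Set.Ioo (0:ℝ) 1, 0 ≤ P' t := by
    intro t ht
    have h0 : P' 0 = 0 := by simp [hP']
    have := hP'mono (Set.mem_Icc.mpr ⟨le_rfl, zero_le_one⟩)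
      (Set.mem_Icc.mpr ⟨ht.1.le, ht.2.le⟩) ht.1.le
    linarith [this, h0.symm.le]
  have hPmono : MonotoneOn P (Set.Icc 0 1) := by
    apply monotoneOn_of_deriv_nonneg (convex_Icc 0 1)
    · exact fun s _ => (hd s).continuousAt.continuousWithinAt
    · exact fun s _ => (hd s).differentiableAt.differentiableWithinAt
    · intro s hs
      rw [interior_Icc] at hs
      rw [(hd s).deriv]
      exact hP'nonneg s hs
  have := hPmono (Set.mem_Icc.mpr ⟨le_rfl, zero_le_one⟩)
    (Set.mem_Icc.mpr ⟨zero_le_one, le_rfl⟩) zero_le_one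
  have h0 : P 0 = 0 := by simp [hP]
  have h1 : P 1 = A + B + C := by simp [hP]
  linarith

lemma stmt3_hasFDerivAt_quad (P : ContinuousMultilinearMap ℝ (fun _ : Fin 2 => E) ℝ)
    (x u : E) :
    ∃ D : E →L[ℝ] ℝ, HasFDerivAt (fun y => P ![y - x, y - x]) D u ∧
      ∀ b, D b = P ![b, u - x] + P ![u - x, b] := by
  have h := HasFDerivAt.multilinear_comp P (g := fun _ y => y - x)
    (g' := fun _ => ContinuousLinearMap.id ℝ E) (x := u)
    (fun _ => (hasFDerivAt_id u).sub_const x)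
  refine ⟨∑ i : Fin 2, (P.toContinuousLinearMap (fun _ => u - x) i).comp
      (ContinuousLinearMap.id ℝ E), ?_, ?_⟩
  · have he : (fun y => P ![y - x, y - x]) = (fun y : E => P (fun _ => y - x)) := by
      funext y; exact congrArg P (stmt3_vec2_diag (y - x)).symm
    rw [he]; exact h
  · intro b
    simp only [ContinuousLinearMap.sum_apply, ContinuousLinearMap.comp_apply,
      ContinuousLinearMap.id_apply, ContinuousMultilinearMap.toContinuousLinearMap,
      ContinuousLinearMap.coe_mk', LinearMap.coe_mk, LinearMap.coe_toAddHom,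
      MultilinearMap.toLinearMap_apply, ContinuousMultilinearMap.coe_coe]
    rw [Fin.sum_univ_two, stmt3_vec2_diag (u - x), stmt3_upd2_0, stmt3_upd2_1]

lemma stmt3_hasFDerivAt_cub (P : ContinuousMultilinearMap ℝ (fun _ : Fin 3 => E) ℝ)
    (x u : E) :
    ∃ D : E →L[ℝ] ℝ, HasFDerivAt (fun y => P ![y - x, y - x, y - x]) D u ∧
      ∀ b, D b = P ![b, u - x, u - x] + P ![u - x, b, u - x] + P ![u - x, u - x, b] := by
  have h := HasFDerivAt.multilinear_comp P (g := fun _ y => y - x)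
    (g' := fun _ => ContinuousLinearMap.id ℝ E) (x := u)
    (fun _ => (hasFDerivAt_id u).sub_const x)
  refine ⟨∑ i : Fin 3, (P.toContinuousLinearMap (fun _ => u - x) i).comp
      (ContinuousLinearMap.id ℝ E), ?_, ?_⟩
  · have he : (fun y => P ![y - x, y - x, y - x]) = (fun y : E => P (fun _ => y - x)) := by
      funext y; exact congrArg P (stmt3_vec3_diag (y - x)).symm
    rw [he]; exact h
  · intro b
    simp only [ContinuousLinearMap.sum_apply, ContinuousLinearMap.comp_apply,
      ContinuousLinearMap.id_apply, ContinuousMultilinearMap.toContinuousLinearMap,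
      ContinuousLinearMap.coe_mk', LinearMap.coe_mk, LinearMap.coe_toAddHom,
      MultilinearMap.toLinearMap_apply, ContinuousMultilinearMap.coe_coe]
    rw [Fin.sum_univ_three, stmt3_vec3_diag (u - x), stmt3_upd3_0, stmt3_upd3_1, stmt3_upd3_2]

lemma stmt3_hasFDerivAt_quart (x u : E) :
    ∃ D : E →L[ℝ] ℝ, HasFDerivAt (fun y => ‖y - x‖ ^ 4) D u ∧
      ∀ b, D b = 4 * ‖u - x‖ ^ 2 * ⟪u - x, b⟫ := by
  have hsub : HasFDerivAt (fun y : E => y - x) (ContinuousLinearMap.id ℝ E) u :=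
    (hasFDerivAt_id u).sub_const x
  have hinner := hsub.inner ℝ hsub
  have hmul := hinner.mul hinner
  refine ⟨(⟪u - x, u - x⟫ : ℝ) •
        ((fderivInnerCLM ℝ (u - x, u - x)).comp
          ((ContinuousLinearMap.id ℝ E).prod (ContinuousLinearMap.id ℝ E))) +
      (⟪u - x, u - x⟫ : ℝ) •
        ((fderivInnerCLM ℝ (u - x, u - x)).comp
          ((ContinuousLinearMap.id ℝ E).prod (ContinuousLinearMap.id ℝ E))), ?_, ?_⟩
  · have he : (fun y => ‖y - x‖ ^ 4)
        = (fun y : E => (⟪y - x, y - x⟫ : ℝ) * (⟪y - x, y - x⟫ : ℝ)) := by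
      funext y
      rw [real_inner_self_eq_norm_sq]
      ring
    rw [he]; exact hmul
  · intro b
    simp only [ContinuousLinearMap.add_apply, ContinuousLinearMap.smul_apply,
      ContinuousLinearMap.comp_apply, ContinuousLinearMap.prod_apply,
      ContinuousLinearMap.id_apply, fderivInnerCLM_apply, smul_eq_mul,
      real_inner_self_eq_norm_sq]
    rw [real_inner_comm b (u - x)]
    ring

lemma stmt3_grad_eval [CompleteSpace E] {φ : E → ℝ} {D : E →L[ℝ] ℝ} {u w : E}
    (h : HasFDerivAt φ D u) : ⟪gradient φ u, w⟫ = D w := by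
  have hg : HasGradientAt φ ((InnerProductSpace.toDual ℝ E).symm D) u := by
    rw [hasGradientAt_iff_hasFDerivAt]; simpa using h
  rw [hg.gradient, InnerProductSpace.toDual_symm_apply]

end Stmt3Aux

set_option maxHeartbeats 2000000 in
/-- for convex `f` with Lipschitz third derivative, the regularized Taylor
polynomial `g(y) = Ω₃(f, x; y) + (τ²L₃/8)‖y − x‖⁴` is strongly convex (with constant 1)
with respect to the prox function
`d(h) = (1/2)(1 − 1/τ)·D²f(x)[h]² + (τ(τ−1)L₃/8)‖h‖⁴`. -/
theorem stmt_3
    {E : Type*} [NormedAddCommGroup E] [InnerProductSpace ℝ E] [FiniteDimensional ℝ E]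
    (f : E → ℝ) (L₃ : ℝ)
    (hf_conv : ConvexOn ℝ Set.univ f) (hf_smooth : ContDiff ℝ 3 f)
    (hf_lip : ∀ x y, ‖iteratedFDeriv ℝ 3 f y - iteratedFDeriv ℝ 3 f x‖ ≤ L₃ * ‖y - x‖)
    (x : E) (τ : ℝ) (hτ : 1 < τ)
    (g d : E → ℝ)
    (hg : ∀ y, g y = f x + ⟪gradient f x, y - x⟫
        + (1 / 2) * iteratedFDeriv ℝ 2 f x ![y - x, y - x]
        + (1 / 6) * iteratedFDeriv ℝ 3 f x ![y - x, y - x, y - x]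
        + (τ ^ 2 * L₃ / 8) * ‖y - x‖ ^ 4)
    (hd : ∀ h, d h = (1 / 2) * (1 - 1 / τ) * iteratedFDeriv ℝ 2 f x ![h, h]
        + (τ * (τ - 1) * L₃ / 8) * ‖h‖ ^ 4)
    (u v : E) :
    g v - g u - ⟪gradient g u, v - u⟫ ≥
      d (v - x) - d (u - x) - ⟪gradient d (u - x), v - u⟫ := by
  rcases subsingleton_or_nontrivial E with hE | hE
  · have hvu : v = u := Subsingleton.elim v u
    rw [hvu]
    simp
  have hτ0 : (0:ℝ) < τ := lt_trans one_pos hτ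
  -- L₃ is nonnegative
  obtain ⟨y₀, hy₀⟩ := exists_ne x
  have hL₃ : 0 ≤ L₃ := by
    have h1 := hf_lip x y₀
    have h2 : 0 < ‖y₀ - x‖ := by
      rw [norm_pos_iff, sub_ne_zero]; exact hy₀
    nlinarith [norm_nonneg (iteratedFDeriv ℝ 3 f y₀ - iteratedFDeriv ℝ 3 f x)]
  -- gradient of g at u
  have hgfun : g = fun y => f x + ⟪gradient f x, y - x⟫
      + (1 / 2) * iteratedFDeriv ℝ 2 f x ![y - x, y - x]
      + (1 / 6) * iteratedFDeriv ℝ 3 f x ![y - x, y - x, y - x]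
      + (τ ^ 2 * L₃ / 8) * ‖y - x‖ ^ 4 := funext hg
  have hdfun : d = fun h => (1 / 2) * (1 - 1 / τ) * iteratedFDeriv ℝ 2 f x ![h, h]
      + (τ * (τ - 1) * L₃ / 8) * ‖h‖ ^ 4 := funext hd
  obtain ⟨D2, hD2, hD2v⟩ := stmt3_hasFDerivAt_quad (iteratedFDeriv ℝ 2 f x) x u
  obtain ⟨D3, hD3, hD3v⟩ := stmt3_hasFDerivAt_cub (iteratedFDeriv ℝ 3 f x) x u
  obtain ⟨D4, hD4, hD4v⟩ := stmt3_hasFDerivAt_quart x u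
  have hlin : HasFDerivAt (fun y : E => (⟪gradient f x, y - x⟫ : ℝ))
      ((innerSL ℝ (gradient f x)).comp (ContinuousLinearMap.id ℝ E)) u :=
    ((innerSL ℝ (gradient f x)).hasFDerivAt).comp u ((hasFDerivAt_id u).sub_const x)
  have hgd : HasFDerivAt g
      (((((0 : E →L[ℝ] ℝ) + (innerSL ℝ (gradient f x)).comp (ContinuousLinearMap.id ℝ E))
        + (1/2 : ℝ) • D2) + (1/6 : ℝ) • D3) + (τ^2*L₃/8 : ℝ) • D4) u := by
    rw [hgfun]
    exact ((((hasFDerivAt_const (f x) u).add hlin).add (hD2.const_mul (1/2))).add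
      (hD3.const_mul (1/6))).add (hD4.const_mul (τ^2*L₃/8))
  have hGg : ⟪gradient g u, v - u⟫
      = ⟪gradient f x, v - u⟫
        + (1/2) * (iteratedFDeriv ℝ 2 f x ![v - u, u - x]
            + iteratedFDeriv ℝ 2 f x ![u - x, v - u])
        + (1/6) * (iteratedFDeriv ℝ 3 f x ![v - u, u - x, u - x]
            + iteratedFDeriv ℝ 3 f x ![u - x, v - u, u - x]
            + iteratedFDeriv ℝ 3 f x ![u - x, u - x, v - u])
        + (τ^2*L₃/8) * (4 * ‖u - x‖^2 * ⟪u - x, v - u⟫) := by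
    rw [stmt3_grad_eval hgd]
    simp only [ContinuousLinearMap.add_apply, ContinuousLinearMap.zero_apply,
      ContinuousLinearMap.smul_apply, ContinuousLinearMap.comp_apply,
      ContinuousLinearMap.id_apply, innerSL_apply_apply, smul_eq_mul, hD2v, hD3v, hD4v]
    ring
  -- gradient of d at u - x
  obtain ⟨E2, hE2, hE2v⟩ := stmt3_hasFDerivAt_quad (iteratedFDeriv ℝ 2 f x) 0 (u - x)
  obtain ⟨E4, hE4, hE4v⟩ := stmt3_hasFDerivAt_quart 0 (u - x)
  have hE2' : HasFDerivAt (fun h : E => iteratedFDeriv ℝ 2 f x ![h, h]) E2 (u - x) := by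
    have he : (fun h : E => iteratedFDeriv ℝ 2 f x ![h, h])
        = (fun h : E => iteratedFDeriv ℝ 2 f x ![h - 0, h - 0]) := by simp
    rw [he]; exact hE2
  have hE4' : HasFDerivAt (fun h : E => ‖h‖ ^ 4) E4 (u - x) := by
    have he : (fun h : E => ‖h‖ ^ 4) = (fun h : E => ‖h - 0‖ ^ 4) := by simp
    rw [he]; exact hE4
  have hdd : HasFDerivAt d
      (((1/2)*(1-1/τ) : ℝ) • E2 + (τ*(τ-1)*L₃/8 : ℝ) • E4) (u - x) := by
    rw [hdfun]
    exact (hE2'.const_mul ((1/2)*(1-1/τ))).add (hE4'.const_mul (τ*(τ-1)*L₃/8))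
  have hGd : ⟪gradient d (u - x), v - u⟫
      = (1/2)*(1-1/τ) * (iteratedFDeriv ℝ 2 f x ![v - u, u - x]
          + iteratedFDeriv ℝ 2 f x ![u - x, v - u])
        + (τ*(τ-1)*L₃/8) * (4 * ‖u - x‖^2 * ⟪u - x, v - u⟫) := by
    rw [stmt3_grad_eval hdd]
    simp only [ContinuousLinearMap.add_apply, ContinuousLinearMap.smul_apply,
      smul_eq_mul, hE2v, hE4v, sub_zero]
  -- rewrite the goal into scalar form
  rw [hg v, hg u, hd (v - x), hd (u - x), hGg, hGd]
  have hvx : v - x = u - x + (v - u) := by abel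
  rw [hvx]
  set a := u - x with ha
  set b := v - u with hb
  set P2 := iteratedFDeriv ℝ 2 f x with hP2
  set P3 := iteratedFDeriv ℝ 3 f x with hP3
  simp only [stmt3_m2_add_left, stmt3_m2_add_right, stmt3_m3_add_1, stmt3_m3_add_2,
    stmt3_m3_add_3]
  -- norm and inner expansions
  have h4v : ‖a + b‖^4 = (‖a‖^2 + 2*⟪a,b⟫ + ‖b‖^2)^2 := by
    rw [show ‖a + b‖^4 = (‖a + b‖^2)^2 from by ring, norm_add_sq_real]
  have einner : (⟪gradient f x, a + b⟫ : ℝ) = ⟪gradient f x, a⟫ + ⟪gradient f x, b⟫ :=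
    inner_add_right _ _ _
  -- symmetry of the third derivative
  have s1 : P3 ![b, a, b] = P3 ![a, b, b] := stmt3_sym12 f hf_smooth x b a b
  have s2 : P3 ![b, b, a] = P3 ![a, b, b] := by
    rw [stmt3_sym23 f hf_smooth x b b a]
    exact s1
  -- the main inequality via the polynomial lemma
  have hABC : ∀ t : ℝ, 0 ≤ 2*((1/2) * (1/τ) * P2 ![b,b] + (1/2) * P3 ![a,b,b]
        + (τ*L₃/8)*(4*⟪a,b⟫^2 + 2*(‖a‖^2*‖b‖^2)))
      + 6*((1/6) * P3 ![b,b,b] + (τ*L₃/8)*(4*(⟪a,b⟫*‖b‖^2)))*t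
      + 12*((τ*L₃/8)*(‖b‖^2)^2)*t^2 := by
    intro t
    have hk := stmt3_key_bound f L₃ hf_conv hf_smooth hf_lip x (τ • (a + t • b)) b
    have e1 : P3 ![τ • (a + t • b), b, b] = τ*(P3 ![a,b,b] + t*P3 ![b,b,b]) := by
      rw [stmt3_m3_smul_1, stmt3_m3_add_1, stmt3_m3_smul_1]
    have e2 : ‖τ • (a + t • b)‖^2 = τ^2*(‖a‖^2 + 2*(t*⟪a,b⟫) + t^2*‖b‖^2) := by
      rw [norm_smul, mul_pow, norm_add_sq_real, real_inner_smul_right, norm_smul]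
      simp [Real.norm_eq_abs, sq_abs, mul_pow]
    rw [e1, e2] at hk
    have hq : 0 ≤ τ^2*L₃*(⟪a,b⟫ + ‖b‖^2*t)^2 :=
      mul_nonneg (mul_nonneg (by positivity) hL₃) (sq_nonneg _)
    have h5 : 2*((1/2) * (1/τ) * P2 ![b,b] + (1/2) * P3 ![a,b,b]
          + (τ*L₃/8)*(4*⟪a,b⟫^2 + 2*(‖a‖^2*‖b‖^2)))
        + 6*((1/6) * P3 ![b,b,b] + (τ*L₃/8)*(4*(⟪a,b⟫*‖b‖^2)))*t
        + 12*((τ*L₃/8)*(‖b‖^2)^2)*t^2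
        = (1/τ)*((P2 ![b,b] + τ*(P3 ![a,b,b] + t*P3 ![b,b,b])
            + L₃/2*(τ^2*(‖a‖^2 + 2*(t*⟪a,b⟫) + t^2*‖b‖^2)*‖b‖^2))
          + τ^2*L₃*(⟪a,b⟫ + ‖b‖^2*t)^2) := by
      field_simp
      ring
    rw [h5]
    apply mul_nonneg (by positivity)
    linarith [hk, hq]
  have hmain := stmt3_poly_nonneg _ _ _ hABC
  rw [h4v, einner, s1, s2]
  linarith [hmain]
end

section
/- Let h = g + φ on a finite-dimensional Euclidean space, where g has Lipschitz continuous p-th derivative with constant L_p(g) > 0 (p ≥ 1) and φ is proper closed convex. Let β ≥ 1 and M = β·L_p(g). Then for any x, y ∈ dom h: h(T_M(h; x)) ≤ h(y) + ((β + 1)·L_p(g)/(p+1)!)·‖y − x‖^{p+1}. -/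
open Finset Set

/-- translation invariance of iterated derivatives -/
lemma itfd_translate {E F : Type*} [NormedAddCommGroup E] [NormedSpace ℝ E]
    [NormedAddCommGroup F] [NormedSpace ℝ F] (c : E) :
    ∀ (n : ℕ) (g : E → F), ContDiff ℝ n g → ∀ w,
      iteratedFDeriv ℝ n (fun y => g (c + y)) w = iteratedFDeriv ℝ n g (c + w) := by
  intro n
  induction n with
  | zero => intro g _ w; ext m; simp
  | succ n ih =>
    intro g hg w
    have hfun : iteratedFDeriv ℝ n (fun y => g (c + y)) =
        fun w => iteratedFDeriv ℝ n g (c + w) :=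
      funext (ih g (hg.of_le (by exact_mod_cast Nat.le_succ n)))
    have hdiff : DifferentiableAt ℝ (iteratedFDeriv ℝ n g) (c + w) :=
      (hg.differentiable_iteratedFDeriv (by exact_mod_cast Nat.lt_succ_self n)).differentiableAt
    have h1 : HasFDerivAt (fun w => iteratedFDeriv ℝ n g (c + w))
        (fderiv ℝ (iteratedFDeriv ℝ n g) (c + w)) w := by
      have := hdiff.hasFDerivAt.comp w ((hasFDerivAt_id w).const_add c)
      simpa [Function.comp_def] using this
    rw [iteratedFDeriv_succ_eq_comp_left, iteratedFDeriv_succ_eq_comp_left]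
    simp only [Function.comp_apply]
    congr 1
    rw [hfun, h1.fderiv]


/-- 1-D Taylor remainder bound with Lipschitz p-th derivative. -/
lemma oneD : ∀ (p : ℕ) (f : ℝ → ℝ), ContDiff ℝ p f → ∀ (K : ℝ), 0 ≤ K →
    (∀ s t, |iteratedDeriv p f s - iteratedDeriv p f t| ≤ K * |s - t|) →
    ∀ t ∈ Set.Icc (0:ℝ) 1,
      |f t - ∑ i ∈ Finset.range (p+1), t ^ i / (Nat.factorial i : ℝ) * iteratedDeriv i f 0|
        ≤ K / (Nat.factorial (p+1) : ℝ) * t ^ (p+1) := by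
  intro p
  induction p with
  | zero =>
    intro f _ K _ hK t ht
    have h0 := hK t 0
    simp only [iteratedDeriv_zero] at h0
    simpa [abs_of_nonneg ht.1] using h0
  | succ p ih =>
    intro f hf K hK0 hK t ht
    set f₁ := deriv f with hf₁
    have hf2 : ContDiff ℝ ((p : WithTop ℕ∞) + 1) f := by exact_mod_cast hf
    have hf' : ContDiff ℝ p f₁ := (contDiff_succ_iff_deriv.mp hf2).2.2
    have hK₁ : ∀ s t, |iteratedDeriv p f₁ s - iteratedDeriv p f₁ t| ≤ K * |s - t| := by
      intro s t
      rw [hf₁, ← iteratedDeriv_succ']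
      exact hK s t
    have IH := ih f₁ hf' K hK0 hK₁
    set d : ℕ → ℝ := fun i => iteratedDeriv i f 0 with hd
    have hd1 : ∀ i, iteratedDeriv i f₁ 0 = d (i+1) := by
      intro i
      show iteratedDeriv i f₁ 0 = iteratedDeriv (i+1) f 0
      rw [iteratedDeriv_succ', hf₁]
    set r : ℝ → ℝ := fun t => f t - ∑ i ∈ Finset.range (p+2), t ^ i / (Nat.factorial i : ℝ) * d i
      with hr
    have hfd : ∀ s : ℝ, HasDerivAt f (f₁ s) s := by
      intro s
      exact (hf.differentiable (by simp)).differentiableAt.hasDerivAt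
    have hrd : ∀ s : ℝ, HasDerivAt r
        (f₁ s - ∑ i ∈ Finset.range (p+1), s ^ i / (Nat.factorial i : ℝ) * d (i+1)) s := by
      intro s
      have hsum : HasDerivAt (fun t => ∑ i ∈ Finset.range (p+2), t ^ i / (Nat.factorial i : ℝ) * d i)
          (∑ i ∈ Finset.range (p+2), ((i:ℝ) * s ^ (i-1)) / (Nat.factorial i : ℝ) * d i) s := by
        apply HasDerivAt.fun_sum
        intro i _
        exact ((hasDerivAt_pow i s).div_const _).mul_const _
      have heq : ∑ i ∈ Finset.range (p+2), ((i:ℝ) * s ^ (i-1)) / (Nat.factorial i : ℝ) * d i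
          = ∑ i ∈ Finset.range (p+1), s ^ i / (Nat.factorial i : ℝ) * d (i+1) := by
        rw [Finset.sum_range_succ']
        simp only [Nat.cast_zero, zero_mul, Nat.factorial_zero, Nat.cast_one, zero_div]
        rw [add_zero]
        apply Finset.sum_congr rfl
        intro i _
        have hfac : (Nat.factorial (i+1) : ℝ) = (i+1) * Nat.factorial i := by
          rw [Nat.factorial_succ]; push_cast; ring
        have h1 : (Nat.factorial i : ℝ) ≠ 0 := by positivity
        have h2 : ((i:ℝ)+1) ≠ 0 := by positivity
        rw [hfac]
        simp only [Nat.add_sub_cancel]; push_cast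
        field_simp
      rw [hr, ← heq]
      exact (hfd s).sub hsum
    have hr0 : r 0 = 0 := by
      rw [hr]
      simp only [Finset.sum_range_succ']
      simp [hd]
    -- apply the fencing lemma
    have hcont : ContinuousOn r (Set.Icc (0:ℝ) 1) :=
      fun s _ => (hrd s).continuousAt.continuousWithinAt
    have hderiv : ∀ s ∈ Set.Ico (0:ℝ) 1, HasDerivWithinAt r
        (f₁ s - ∑ i ∈ Finset.range (p+1), s ^ i / (Nat.factorial i : ℝ) * d (i+1)) (Set.Ici s) s :=
      fun s _ => (hrd s).hasDerivWithinAt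
    have hB : ∀ s : ℝ, HasDerivAt (fun s : ℝ => K / (Nat.factorial (p+2) : ℝ) * s ^ (p+2))
        (K / (Nat.factorial (p+1) : ℝ) * s ^ (p+1)) s := by
      intro s
      have h0 : HasDerivAt (fun s : ℝ => K / (Nat.factorial (p+2) : ℝ) * s ^ (p+2))
          (K / (Nat.factorial (p+2) : ℝ) * (((p:ℝ)+2) * s ^ (p+1))) s :=
        ((hasDerivAt_pow (p+2) s).const_mul _).congr_deriv (by push_cast; ring)
      convert h0 using 1
      have hfac : (Nat.factorial (p+2) : ℝ) = ((p:ℝ)+2) * Nat.factorial (p+1) := by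
        rw [show p+2 = (p+1)+1 from rfl, Nat.factorial_succ]; push_cast; ring
      rw [hfac]
      have h1 : (Nat.factorial (p+1) : ℝ) ≠ 0 := by positivity
      have h2 : ((p:ℝ)+2) ≠ 0 := by positivity
      field_simp
    have hbound : ∀ s ∈ Set.Ico (0:ℝ) 1,
        ‖f₁ s - ∑ i ∈ Finset.range (p+1), s ^ i / (Nat.factorial i : ℝ) * d (i+1)‖
          ≤ K / (Nat.factorial (p+1) : ℝ) * s ^ (p+1) := by
      intro s hs
      have := IH s ⟨hs.1, le_of_lt hs.2⟩
      simp only [hd1] at this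
      simpa [Real.norm_eq_abs] using this
    have ha : ‖r 0‖ ≤ K / (Nat.factorial (p+2) : ℝ) * (0:ℝ) ^ (p+2) := by simp [hr0]
    have key := image_norm_le_of_norm_deriv_right_le_deriv_boundary hcont hderiv ha hB hbound
    have := key ht
    simpa [hr, Real.norm_eq_abs] using this

lemma taylor_vec {E : Type*} [NormedAddCommGroup E] [NormedSpace ℝ E]
    (p : ℕ) (g : E → ℝ) (hg : ContDiff ℝ p g) (L : ℝ) (hL0 : 0 ≤ L)
    (hlip : ∀ u w, ‖iteratedFDeriv ℝ p g u - iteratedFDeriv ℝ p g w‖ ≤ L * ‖u - w‖)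
    (x z : E) :
    |g z - (g x + ∑ i ∈ Finset.Icc 1 p,
        (1 / (Nat.factorial i : ℝ)) * iteratedFDeriv ℝ i g x (fun _ => z - x))|
      ≤ L / (Nat.factorial (p+1) : ℝ) * ‖z - x‖ ^ (p+1) := by
  set v := z - x with hv
  set ℓ : ℝ →L[ℝ] E := (ContinuousLinearMap.id ℝ ℝ).smulRight v with hℓ
  have hℓ_app : ∀ t : ℝ, ℓ t = t • v := fun t => rfl
  have hgx_cd : ContDiff ℝ p (fun y => g (x + y)) := hg.comp (contDiff_const.add contDiff_id)
  set f : ℝ → ℝ := fun t => g (x + t • v) with hfdef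
  have hf_eq : f = (fun y => g (x + y)) ∘ ℓ := rfl
  have hf_cd : ContDiff ℝ p f := hgx_cd.comp ℓ.contDiff
  -- iterated derivatives of f
  have key : ∀ (i : ℕ), i ≤ p → ∀ t : ℝ,
      iteratedDeriv i f t = iteratedFDeriv ℝ i g (x + t • v) (fun _ => v) := by
    intro i hi t
    rw [iteratedDeriv_eq_iteratedFDeriv, hf_eq,
      ℓ.iteratedFDeriv_comp_right hgx_cd t (by exact_mod_cast hi)]
    simp only [ContinuousMultilinearMap.compContinuousLinearMap_apply]
    have hv1 : ∀ j : Fin i, ℓ (1:ℝ) = v := fun _ => by simp [hℓ_app]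
    rw [show (fun j : Fin i => ℓ (1:ℝ)) = (fun _ : Fin i => v) from funext hv1]
    rw [hℓ_app t, itfd_translate x i g (hg.of_le (by exact_mod_cast hi)) (t • v)]
  -- Lipschitz constant for iteratedDeriv p f
  have hK : ∀ s t : ℝ, |iteratedDeriv p f s - iteratedDeriv p f t|
      ≤ (L * ‖v‖ ^ (p+1)) * |s - t| := by
    intro s t
    rw [key p le_rfl s, key p le_rfl t]
    have h1 : iteratedFDeriv ℝ p g (x + s • v) (fun _ => v)
        - iteratedFDeriv ℝ p g (x + t • v) (fun _ => v)
        = (iteratedFDeriv ℝ p g (x + s • v) - iteratedFDeriv ℝ p g (x + t • v)) (fun _ => v) := by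
      simp [ContinuousMultilinearMap.sub_apply]
    rw [show |iteratedFDeriv ℝ p g (x + s • v) (fun _ => v)
        - iteratedFDeriv ℝ p g (x + t • v) (fun _ => v)|
      = ‖(iteratedFDeriv ℝ p g (x + s • v) - iteratedFDeriv ℝ p g (x + t • v)) (fun _ => v)‖ by
        rw [← h1]; rfl]
    calc ‖(iteratedFDeriv ℝ p g (x + s • v) - iteratedFDeriv ℝ p g (x + t • v)) (fun _ => v)‖
        ≤ ‖iteratedFDeriv ℝ p g (x + s • v) - iteratedFDeriv ℝ p g (x + t • v)‖
            * ∏ _j : Fin p, ‖v‖ :=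
          (iteratedFDeriv ℝ p g (x + s • v) - iteratedFDeriv ℝ p g (x + t • v)).le_opNorm _
      _ ≤ (L * ‖(x + s • v) - (x + t • v)‖) * ‖v‖ ^ p := by
          rw [Finset.prod_const, Finset.card_univ, Fintype.card_fin]
          exact mul_le_mul_of_nonneg_right (hlip _ _) (by positivity)
      _ = (L * ‖v‖ ^ (p+1)) * |s - t| := by
          rw [show (x + s • v) - (x + t • v) = (s - t) • v by module, norm_smul]
          simp [Real.norm_eq_abs]
          ring
  have hK0 : 0 ≤ L * ‖v‖ ^ (p+1) := by positivity
  have main := oneD p f hf_cd (L * ‖v‖ ^ (p+1)) hK0 hK 1 ⟨zero_le_one, le_rfl⟩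
  have hf1 : f 1 = g z := by
    show g (x + (1:ℝ) • v) = g z
    congr 1
    rw [hv]
    module
  have hsum : ∑ i ∈ Finset.range (p+1), (1:ℝ) ^ i / (Nat.factorial i : ℝ) * iteratedDeriv i f 0
      = g x + ∑ i ∈ Finset.Icc 1 p,
          (1 / (Nat.factorial i : ℝ)) * iteratedFDeriv ℝ i g x (fun _ => v) := by
    rw [Finset.range_eq_Ico, Finset.sum_eq_sum_Ico_succ_bot (Nat.succ_pos p)]
    congr 1
    · rw [key 0 (Nat.zero_le p) 0]
      simp
    · rw [show Finset.Ico 1 (p+1) = Finset.Icc 1 p from rfl]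
      apply Finset.sum_congr rfl
      intro i hi
      rw [key i (Finset.mem_Icc.mp hi).2 0]
      simp
  have h2 : L * ‖v‖ ^ (p+1) / (Nat.factorial (p+1) : ℝ) * (1:ℝ) ^ (p+1)
      = L / (Nat.factorial (p+1) : ℝ) * ‖v‖ ^ (p+1) := by ring
  rw [hf1, hsum, h2] at main
  exact main

open scoped RealInnerProductSpace

/-- Lemma 4.3: global estimate for the composite tensor step:
`h(T_M(h; x)) ≤ h(y) + ((β+1)L_p(g)/(p+1)!)‖y − x‖^{p+1}` for all `x, y`. -/
theorem stmt_11
    {E : Type*} [NormedAddCommGroup E] [InnerProductSpace ℝ E] [FiniteDimensional ℝ E]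
    (p : ℕ) (hp : 1 ≤ p)
    (g φ h : E → ℝ) (L : ℝ) (hL : 0 < L)
    (hg_smooth : ContDiff ℝ p g)
    -- the p-th derivative of g is Lipschitz continuous with constant L = L_p(g)
    (hg_lip : ∀ x y, ‖iteratedFDeriv ℝ p g x - iteratedFDeriv ℝ p g y‖ ≤ L * ‖x - y‖)
    (hφ_conv : ConvexOn ℝ Set.univ φ) (hφ_closed : LowerSemicontinuous φ)
    (hh : ∀ y, h y = g y + φ y)
    -- Ω is the Taylor polynomial of degree p of g around x
    (Ω : E → E → ℝ)
    (hΩ : ∀ x y, Ω x y = g x + ∑ i ∈ Finset.Icc 1 p,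
      (1 / (Nat.factorial i : ℝ)) * iteratedFDeriv ℝ i g x (fun _ => y - x))
    (b M : ℝ) (hb : 1 ≤ b) (hM : M = b * L)
    (x T : E)
    -- T = T_M(h; x) is the composite tensor step from x
    (hT : ∀ y, Ω x T + M / (Nat.factorial (p + 1) : ℝ) * ‖T - x‖ ^ (p + 1) + φ T
      ≤ Ω x y + M / (Nat.factorial (p + 1) : ℝ) * ‖y - x‖ ^ (p + 1) + φ y)
    (y : E) :
    h T ≤ h y + (b + 1) * L / (Nat.factorial (p + 1) : ℝ) * ‖y - x‖ ^ (p + 1) := by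
  have taylT := taylor_vec p g hg_smooth L hL.le hg_lip x T
  have tayly := taylor_vec p g hg_smooth L hL.le hg_lip x y
  rw [← hΩ x T] at taylT
  rw [← hΩ x y] at tayly
  have hfac : (0:ℝ) < (Nat.factorial (p+1) : ℝ) := by positivity
  have hLM : L ≤ M := by nlinarith
  have d1 : (0:ℝ) ≤ ‖T - x‖ ^ (p+1) := by positivity
  have d2 : (0:ℝ) ≤ ‖y - x‖ ^ (p+1) := by positivity
  have h1 : g T ≤ Ω x T + L / (Nat.factorial (p+1) : ℝ) * ‖T - x‖ ^ (p+1) := by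
    have := (abs_le.mp taylT).2
    linarith
  have h2 : Ω x y ≤ g y + L / (Nat.factorial (p+1) : ℝ) * ‖y - x‖ ^ (p+1) := by
    have := (abs_le.mp tayly).1
    linarith
  have h3 : L / (Nat.factorial (p+1) : ℝ) * ‖T - x‖ ^ (p+1)
      ≤ M / (Nat.factorial (p+1) : ℝ) * ‖T - x‖ ^ (p+1) := by
    have : L / (Nat.factorial (p+1) : ℝ) ≤ M / (Nat.factorial (p+1) : ℝ) := by gcongr
    exact mul_le_mul_of_nonneg_right this d1
  have h4 := hT y
  have hfin : L / (Nat.factorial (p+1) : ℝ) * ‖y - x‖ ^ (p+1)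
      + M / (Nat.factorial (p+1) : ℝ) * ‖y - x‖ ^ (p+1)
      = (b + 1) * L / (Nat.factorial (p+1) : ℝ) * ‖y - x‖ ^ (p+1) := by
    rw [hM]; ring
  rw [hh T, hh y]
  linarith
end
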